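/- arXiv:1804.09791 — 10 statements merged into one kernel-verified Lean document; each statement's English description precedes it below -/
import Mathlib

section
/- Let M ∈ ℝ^{m×n} and let s be an integer with 0 ≤ s < m. If for every subset I ⊆ {1,…,m} with |I| = m − s the (m−s)×n submatrix of M consisting of the rows indexed by I has rank n (so that the scheme can tolerate any s stragglers), then the number of nonzero entries of M is at least n(s+1). -/
/-- If every (m−s)×n row-submatrix of M ∈ ℝ^{m×n} has full column rank n
(so the scheme tolerates any s stragglers), then M has at least n(s+1) nonzero entries. -/
theorem stmt_1 (m n s : ℕ) (hs : s < m) (M : Matrix (Fin m) (Fin n) ℝ)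
    (h : ∀ I : Finset (Fin m), I.card = m - s →
      (M.submatrix (fun i : I => (i : Fin m)) id).rank = n) :
    n * (s + 1) ≤ {p : Fin m × Fin n | M p.1 p.2 ≠ 0}.ncard := by
  classical
  have key : ∀ j : Fin n, s + 1 ≤ (Finset.univ.filter fun i => M i j ≠ 0).card := by
    intro j
    by_contra hlt
    push_neg at hlt
    have hlt' : (Finset.univ.filter fun i => M i j ≠ 0).card ≤ s := by omega
    have hcard : m - s ≤ (Finset.univ.filter fun i => M i j ≠ 0)ᶜ.card := by
      rw [Finset.card_compl, Fintype.card_fin]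
      omega
    obtain ⟨I, hIsub, hIcard⟩ := Finset.exists_subset_card_eq hcard
    have hr := h I hIcard
    set B := M.submatrix (fun i : I => (i : Fin m)) id with hB
    have hcolzero : ∀ i : I, B i j = 0 := by
      intro i
      have hmem := hIsub i.2
      simp only [Finset.mem_compl, Finset.mem_filter, Finset.mem_univ, true_and,
        not_not] at hmem
      exact hmem
    -- rank n implies injective mulVecLin
    have hrn : B.rank = n := hr
    have hker : LinearMap.ker B.mulVecLin = ⊥ := by
      have h1 := LinearMap.finrank_range_add_finrank_ker B.mulVecLin
      rw [show Module.finrank ℝ (Fin n → ℝ) = n by simp] at h1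
      have h2 : Module.finrank ℝ (LinearMap.range B.mulVecLin) = n := hrn
      have : Module.finrank ℝ (LinearMap.ker B.mulVecLin) = 0 := by omega
      exact Submodule.finrank_eq_zero.mp this
    have hinj : Function.Injective B.mulVecLin := LinearMap.ker_eq_bot.mp hker
    have hz : B.mulVecLin (Pi.single j 1) = 0 := by
      funext i
      simp only [Matrix.mulVecLin_apply, Matrix.mulVec, dotProduct, Pi.single_apply]
      rw [Finset.sum_eq_single j]
      · simpa using hcolzero i
      · intro k _ hk; simp [hk]
      · simp
    have := hinj (by rw [hz, map_zero] : B.mulVecLin (Pi.single j 1) = B.mulVecLin 0)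
    have h10 : (Pi.single j 1 : Fin n → ℝ) j = 0 := by rw [this]; rfl
    simp at h10
  -- now count
  have hset : {p : Fin m × Fin n | M p.1 p.2 ≠ 0}.ncard
      = (Finset.univ.filter fun p : Fin m × Fin n => M p.1 p.2 ≠ 0).card := by
    rw [← Set.ncard_coe_finset]
    congr 1
    ext p
    simp
  rw [hset]
  rw [Finset.card_eq_sum_card_fiberwise (f := Prod.snd) (t := Finset.univ)
    (fun x _ => Finset.mem_univ _)]
  have hfib : ∀ j : Fin n,
      ((Finset.univ.filter fun p : Fin m × Fin n => M p.1 p.2 ≠ 0).filter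
        fun p => p.snd = j).card = (Finset.univ.filter fun i => M i j ≠ 0).card := by
    intro j
    apply Finset.card_bij (fun p _ => p.1)
    · intro p hp
      simp only [Finset.mem_filter, Finset.mem_univ, true_and] at hp ⊢
      obtain ⟨h1, h2⟩ := hp
      rwa [h2] at h1
    · intro p hp q hq hpq
      simp only [Finset.mem_filter] at hp hq
      exact Prod.ext hpq (hp.2.trans hq.2.symm)
    · intro i hi
      simp only [Finset.mem_filter, Finset.mem_univ, true_and] at hi
      exact ⟨(i, j), by simp [hi], rfl⟩
  calc n * (s + 1) = ∑ _j : Fin n, (s + 1) := by simp [Nat.mul_comm]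
    _ ≤ ∑ j : Fin n, (Finset.univ.filter fun i => M i j ≠ 0).card :=
        Finset.sum_le_sum fun j _ => key j
    _ = _ := by
        apply Finset.sum_congr rfl
        intro j _
        exact (hfib j).symm
end

section
/- Fix integers n ≥ 1 and s ≥ 0 and set m = n + s. Let S ⊆ ℝ be a finite set with |S| ≥ 2 n² · C(m, n) (binomial coefficient m choose n). Construct a random matrix M ∈ ℝ^{m×n} by drawing, independently and uniformly from S, the entries M_{ij} for every pair (i,j) with max(1, i−s) ≤ j ≤ min(i, n), and setting all other entries to 0. Then with probability at least 1/2, for every subset U ⊆ {1,…,m} with |U| = n, the n×n submatrix of M consisting of the rows indexed by U is invertible. Hence the s-diagonal code achieves the recovery threshold of n. -/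
open scoped Classical

open Matrix Finset

/-- det of the matrix with last row replaced by the indicator of the last column
equals the det of the top-left minor. -/
lemma det_updateRow_single {n : ℕ} (A : Matrix (Fin (n+1)) (Fin (n+1)) ℝ) :
    (A.updateRow (Fin.last n) (Pi.single (Fin.last n) 1)).det
      = ((A.updateRow (Fin.last n) (Pi.single (Fin.last n) 1)).submatrix
          Fin.castSucc Fin.castSucc).det := by
  rw [Matrix.det_succ_row _ (Fin.last n)]
  rw [Finset.sum_eq_single (Fin.last n)]
  · simp [Fin.succAbove_last]
  · intro j _ hj
    simp [Matrix.updateRow_self, Pi.single_apply, hj.symm]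
  · simp

lemma key (S : Finset ℝ) : ∀ (n : ℕ) (C : Matrix (Fin n) (Fin n) ℝ),
    (S.card - 1) ^ n ≤ (Finset.univ.filter (fun x : Fin n → S =>
      (C + Matrix.diagonal (fun k => (x k : ℝ))).det ≠ 0)).card := by
  intro n
  induction n with
  | zero =>
    intro C
    simp [Matrix.det_fin_zero]
  | succ n ih =>
    intro C
    set c := S.card with hc
    -- matrix as function of x
    set M : (Fin (n+1) → S) → Matrix (Fin (n+1)) (Fin (n+1)) ℝ :=
      fun x => C + Matrix.diagonal (fun k => (x k : ℝ)) with hM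
    set C' : Matrix (Fin n) (Fin n) ℝ := C.submatrix Fin.castSucc Fin.castSucc with hC'
    set E : (Fin n → S) → ℝ :=
      fun x' => (C' + Matrix.diagonal (fun k => (x' k : ℝ))).det with hE
    -- decomposition of det
    have hrow : ∀ (x' : Fin n → S) (a : S),
        M (Fin.snoc x' a) (Fin.last n)
          = C (Fin.last n) + (a : ℝ) • (Pi.single (Fin.last n) 1 : Fin (n+1) → ℝ) := by
      intro x' a
      funext j
      by_cases hj : (Fin.last n) = j
      · subst hj; simp [hM, Matrix.diagonal_apply, Fin.snoc_last]
      · have hj' : j ≠ Fin.last n := fun h => hj h.symm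
        simp [hM, Matrix.add_apply, Matrix.diagonal_apply, Pi.single_apply, hj, hj']
    have hDind : ∀ (x' : Fin n → S) (a b : S),
        (M (Fin.snoc x' a)).updateRow (Fin.last n) (C (Fin.last n))
          = (M (Fin.snoc x' b)).updateRow (Fin.last n) (C (Fin.last n)) := by
      intro x' a b
      funext i j
      by_cases hi : i = Fin.last n
      · subst hi; simp
      · rw [Matrix.updateRow_ne hi, Matrix.updateRow_ne hi]
        rcases (Fin.eq_castSucc_or_eq_last i).resolve_right hi with ⟨k, rfl⟩
        simp [hM, Matrix.add_apply, Matrix.diagonal_apply, Fin.snoc_castSucc]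
    have hdet : ∀ (x' : Fin n → S) (a : S),
        (M (Fin.snoc x' a)).det
          = ((M (Fin.snoc x' a)).updateRow (Fin.last n) (C (Fin.last n))).det
            + (a : ℝ) * E x' := by
      intro x' a
      conv_lhs => rw [← Matrix.updateRow_eq_self (M (Fin.snoc x' a)) (Fin.last n),
        hrow x' a]
      rw [Matrix.det_updateRow_add, Matrix.det_updateRow_smul]
      congr 1
      rw [det_updateRow_single]
      simp only [hE, hC']
      have hmat : ((M (Fin.snoc x' a)).updateRow (Fin.last n)
          (Pi.single (Fin.last n) 1)).submatrix Fin.castSucc Fin.castSucc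
          = C.submatrix Fin.castSucc Fin.castSucc
            + Matrix.diagonal (fun k => ((x' k : ℝ))) := by
        funext k l
        have hk : (Fin.castSucc k) ≠ Fin.last n := (Fin.castSucc_lt_last k).ne
        rw [Matrix.submatrix_apply, Matrix.updateRow_ne hk]
        simp [hM, Matrix.add_apply, Matrix.diagonal_apply, Fin.snoc_castSucc,
          Fin.castSucc_inj]
      rw [hmat]
    -- injectivity of zeros in the last coordinate
    have hinj : ∀ (x' : Fin n → S), E x' ≠ 0 → ∀ a b : S,
        (M (Fin.snoc x' a)).det = 0 → (M (Fin.snoc x' b)).det = 0 → a = b := by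
      intro x' hE' a b ha hb
      rw [hdet] at ha hb
      rw [hDind x' a b] at ha
      have : (a : ℝ) * E x' = (b : ℝ) * E x' := by linarith
      have : (a : ℝ) = b := by
        exact mul_right_cancel₀ hE' this
      exact Subtype.ext this
    -- counting
    have hfib := Finset.card_eq_sum_card_fiberwise
      (f := fun x : Fin (n+1) → S => (Fin.init x : Fin n → S))
      (s := Finset.univ.filter (fun x : Fin (n+1) → S => (M x).det ≠ 0))
      (t := (Finset.univ : Finset (Fin n → S))) (fun x _ => Finset.mem_univ _)
    rw [hfib]
    have hstep : ∀ x' ∈ Finset.univ.filter (fun x' : Fin n → S => E x' ≠ 0),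
        c - 1 ≤ ((Finset.univ.filter (fun x : Fin (n+1) → S => (M x).det ≠ 0)).filter
          (fun x => Fin.init x = x')).card := by
      intro x' hx'
      rw [Finset.mem_filter] at hx'
      have hE' := hx'.2
      -- inject {a : S | det (M (snoc x' a)) ≠ 0} into the fiber
      have hsub : c - 1 ≤ (Finset.univ.filter
          (fun a : S => (M (Fin.snoc x' a)).det ≠ 0)).card := by
        have hle1 : (Finset.univ.filter
            (fun a : S => (M (Fin.snoc x' a)).det = 0)).card ≤ 1 := by
          apply Finset.card_le_one.2
          intro a ha b hb
          rw [Finset.mem_filter] at ha hb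
          exact hinj x' hE' a b ha.2 hb.2
        have := Finset.card_filter_add_card_filter_not
          (s := (Finset.univ : Finset S))
          (p := fun a : S => (M (Fin.snoc x' a)).det = 0)
        have hcard : (Finset.univ : Finset S).card = c := by
          simp [hc, Fintype.card_coe]
        simp only [ne_eq] at hle1 this ⊢
        omega
      refine le_trans hsub (Finset.card_le_card_of_injOn
        (fun a => Fin.snoc x' a) ?_ ?_)
      · intro a ha
        rw [Finset.mem_coe, Finset.mem_filter] at ha ⊢
        refine ⟨Finset.mem_filter.2 ⟨Finset.mem_univ _, ha.2⟩, ?_⟩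
        simp
      · intro a _ b _ hab
        have := congrArg (fun g => g (Fin.last n)) hab
        simpa [Fin.snoc_last] using this
    calc (c - 1) ^ (n+1) = (c-1)^n * (c-1) := by ring
    _ ≤ (Finset.univ.filter (fun x' : Fin n → S => E x' ≠ 0)).card * (c-1) := by
        exact Nat.mul_le_mul_right _ (ih C')
    _ = ∑ x' ∈ Finset.univ.filter (fun x' : Fin n → S => E x' ≠ 0), (c-1) := by
        rw [Finset.sum_const, smul_eq_mul]
    _ ≤ ∑ x' ∈ Finset.univ.filter (fun x' : Fin n → S => E x' ≠ 0),
          ((Finset.univ.filter (fun x : Fin (n+1) → S => (M x).det ≠ 0)).filter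
            (fun x => Fin.init x = x')).card := Finset.sum_le_sum hstep
    _ ≤ ∑ x' ∈ (Finset.univ : Finset (Fin n → S)),
          ((Finset.univ.filter (fun x : Fin (n+1) → S => (M x).det ≠ 0)).filter
            (fun x => Fin.init x = x')).card := by
        exact Finset.sum_le_sum_of_subset (Finset.filter_subset _ _)

lemma band_lb {n m : ℕ} (g : Fin n → Fin m) (hg : StrictMono g) (k : Fin n) :
    (k : ℕ) ≤ (g k : ℕ) := by
  have H : ∀ v : ℕ, ∀ k : Fin n, (k : ℕ) = v → v ≤ (g k : ℕ) := by
    intro v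
    induction v with
    | zero => intro k _; exact Nat.zero_le _
    | succ v ih =>
      intro k hk
      have hv : v < n := by omega
      have h1 : (⟨v, hv⟩ : Fin n) < k := by
        simp only [Fin.lt_def, Fin.val_mk]; omega
      have h2 := hg h1
      rw [Fin.lt_def] at h2
      have h3 := ih ⟨v, hv⟩ rfl
      omega
  exact H _ k rfl

lemma band_ub {n s : ℕ} (g : Fin n → Fin (n + s)) (hg : StrictMono g) (k : Fin n) :
    (g k : ℕ) ≤ (k : ℕ) + s := by
  have H : ∀ j : ℕ, ∀ k : Fin n, (k : ℕ) + j < n → (g k : ℕ) + j < n + s := by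
    intro j
    induction j with
    | zero => intro k _; simpa using (g k).isLt
    | succ j ih =>
      intro k hk
      have hk1 : (k : ℕ) + 1 < n := by omega
      have h1 : k < (⟨(k : ℕ) + 1, hk1⟩ : Fin n) := by
        simp only [Fin.lt_def, Fin.val_mk]; omega
      have h2 := hg h1
      rw [Fin.lt_def] at h2
      have h3 := ih ⟨(k : ℕ) + 1, hk1⟩ (by simp only [Fin.val_mk]; omega)
      omega
  have hk : (k : ℕ) + (n - 1 - (k : ℕ)) < n := by have := k.isLt; omega
  have := H (n - 1 - (k : ℕ)) k hk
  have hkn := k.isLt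
  omega

lemma pow_succ_le (d : ℕ) : ∀ n : ℕ, (d + 1) ^ n ≤ d ^ n + n * (d + 1) ^ (n - 1) := by
  intro n
  induction n with
  | zero => simp
  | succ n ih =>
    rcases Nat.eq_zero_or_pos n with rfl | hn
    · simp
    · have h1 : (d + 1) ^ (n + 1) = d * (d + 1) ^ n + (d + 1) ^ n := by ring
      have h2 : d * (d + 1) ^ n ≤ d * d ^ n + d * (n * (d + 1) ^ (n - 1)) := by
        rw [← Nat.mul_add]
        exact Nat.mul_le_mul_left d ih
      have h3 : d * (d + 1) ^ (n - 1) ≤ (d + 1) ^ n := by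
        calc d * (d + 1) ^ (n - 1) ≤ (d + 1) * (d + 1) ^ (n - 1) :=
              Nat.mul_le_mul_right _ (Nat.le_succ d)
          _ = (d + 1) ^ (n - 1 + 1) := by rw [pow_succ']
          _ = (d + 1) ^ n := by congr 1; omega
      have h4 : d * (n * (d + 1) ^ (n - 1)) = n * (d * (d + 1) ^ (n - 1)) := by ring
      have h5 : n * (d * (d + 1) ^ (n - 1)) ≤ n * (d + 1) ^ n := Nat.mul_le_mul_left n h3
      have h6 : d * d ^ n = d ^ (n + 1) := by ring
      calc (d + 1) ^ (n + 1) = d * (d + 1) ^ n + (d + 1) ^ n := h1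
        _ ≤ (d * d ^ n + d * (n * (d + 1) ^ (n - 1))) + (d + 1) ^ n := by omega
        _ = d ^ (n + 1) + (n * (d * (d + 1) ^ (n - 1)) + (d + 1) ^ n) := by rw [h6, h4]; ring
        _ ≤ d ^ (n + 1) + (n * (d + 1) ^ n + (d + 1) ^ n) := by omega
        _ = d ^ (n + 1) + (n + 1) * ((d + 1) ^ n) := by ring
        _ = d ^ (n + 1) + (n + 1) * ((d + 1) ^ (n + 1 - 1)) := by norm_num

lemma pow_le_sub (c N : ℕ) : c ^ N ≤ (c - 1) ^ N + N * c ^ (N - 1) := by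
  rcases Nat.eq_zero_or_pos c with rfl | hc
  · rcases Nat.eq_zero_or_pos N with rfl | hN
    · simp
    · rw [Nat.zero_pow (by omega)]; exact Nat.zero_le _
  · obtain ⟨d, rfl⟩ : ∃ d, c = d + 1 := ⟨c - 1, by omega⟩
    simpa using pow_succ_le d N

lemma badU_bound (n s : ℕ) (hn : 1 ≤ n) (S : Finset ℝ) (ι : Fin n → Fin (n + s))
    (hι : StrictMono ι) :
    (Finset.univ.filter (fun f : Fin (n + s) × Fin n → S =>
      ((Matrix.of fun (i : Fin (n + s)) (j : Fin n) =>
          if j.val ≤ i.val ∧ i.val ≤ j.val + s then (f (i, j) : ℝ) else 0).submatrix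
        ι id).det = 0)).card
      ≤ n * S.card ^ ((n + s) * n - 1) := by
  classical
  set c := S.card with hc
  have hlb : ∀ k : Fin n, (k : ℕ) ≤ (ι k : ℕ) := band_lb ι hι
  have hub : ∀ k : Fin n, (ι k : ℕ) ≤ (k : ℕ) + s := band_ub ι hι
  -- the determinant as a function of f
  set Df : (Fin (n + s) × Fin n → S) → ℝ := fun f =>
    ((Matrix.of fun (i : Fin (n + s)) (j : Fin n) =>
        if j.val ≤ i.val ∧ i.val ≤ j.val + s then (f (i, j) : ℝ) else 0).submatrix
      ι id).det with hDf
  -- off-diagonal positions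
  set Q := {p : Fin (n + s) × Fin n // ¬ p.1 = ι p.2} with hQ
  set g : (Fin (n + s) × Fin n → S) → (Q → S) := fun f q => f q.1 with hg
  set combine : (Fin n → S) → (Q → S) → (Fin (n + s) × Fin n → S) :=
    fun x r p => if h : p.1 = ι p.2 then x p.2 else r ⟨p, h⟩ with hcombine
  set Cr : (Q → S) → Matrix (Fin n) (Fin n) ℝ := fun r => Matrix.of fun k l =>
    if h : ι k = ι l then 0
    else if l.val ≤ (ι k).val ∧ (ι k).val ≤ l.val + s then (r ⟨(ι k, l), h⟩ : ℝ) else 0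
    with hCr
  have hmateq : ∀ (x : Fin n → S) (r : Q → S),
      Df (combine x r) = (Cr r + Matrix.diagonal (fun k => (x k : ℝ))).det := by
    intro x r
    refine congrArg Matrix.det ?_
    funext k l
    by_cases hkl : k = l
    · subst hkl
      have hband : (k : ℕ) ≤ (ι k : ℕ) ∧ (ι k : ℕ) ≤ (k : ℕ) + s := ⟨hlb k, hub k⟩
      simp [hDf, hCr, hcombine, Matrix.add_apply, Matrix.diagonal_apply, hband]
    · have hne : ¬ ((ι k, l) : Fin (n + s) × Fin n).1 = ι ((ι k, l) : Fin (n + s) × Fin n).2 :=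
        fun h => hkl (hι.injective h)
      simp only [hDf, Matrix.submatrix_apply, Matrix.of_apply, id_eq, hcombine,
        Matrix.add_apply, hCr, Matrix.diagonal_apply, hkl, if_false]
      rw [dif_neg hne, dif_neg hne]
      simp
  -- fiberwise counting of the good set
  have hfib := Finset.card_eq_sum_card_fiberwise
    (f := g)
    (s := Finset.univ.filter (fun f : Fin (n + s) × Fin n → S => Df f ≠ 0))
    (t := (Finset.univ : Finset (Q → S))) (fun f _ => Finset.mem_univ _)
  have hstep : ∀ r ∈ (Finset.univ : Finset (Q → S)),
      (c - 1) ^ n ≤ ((Finset.univ.filter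
          (fun f : Fin (n + s) × Fin n → S => Df f ≠ 0)).filter (fun f => g f = r)).card := by
    intro r _
    refine le_trans (key S n (Cr r)) (Finset.card_le_card_of_injOn
      (fun x => combine x r) ?_ ?_)
    · intro x hx
      rw [Finset.mem_coe, Finset.mem_filter] at hx ⊢
      refine ⟨Finset.mem_filter.2 ⟨Finset.mem_univ _, ?_⟩, ?_⟩
      · rw [hmateq x r]; exact hx.2
      · funext q
        simp only [hg, hcombine]
        rw [dif_neg q.2]
    · intro x _ y _ hxy
      funext k
      have hband : (ι k, k).1 = ι ((ι k, k) : Fin (n + s) × Fin n).2 := rfl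
      have := congrArg (fun f => f (ι k, k)) hxy
      simpa [hcombine] using this
  have hgood : (c - 1) ^ n * c ^ ((n + s) * n - n) ≤
      (Finset.univ.filter (fun f : Fin (n + s) × Fin n → S => Df f ≠ 0)).card := by
    rw [hfib]
    have hcardQ : Fintype.card Q = (n + s) * n - n := by
      have e : {p : Fin (n + s) × Fin n // p.1 = ι p.2} ≃ Fin n :=
        { toFun := fun q => q.1.2
          invFun := fun k => ⟨(ι k, k), rfl⟩
          left_inv := fun q => Subtype.ext (Prod.ext q.2.symm rfl)
          right_inv := fun k => rfl }
      have h1 : Fintype.card {p : Fin (n + s) × Fin n // p.1 = ι p.2} = n := by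
        rw [Fintype.card_congr e, Fintype.card_fin]
      calc Fintype.card Q
          = Fintype.card (Fin (n + s) × Fin n)
            - Fintype.card {p : Fin (n + s) × Fin n // p.1 = ι p.2} :=
            Fintype.card_subtype_compl _
        _ = (n + s) * n - n := by rw [h1]; simp [Fintype.card_prod]
    have hcardfun : (Finset.univ : Finset (Q → S)).card = c ^ ((n + s) * n - n) := by
      rw [Finset.card_univ, Fintype.card_fun, Fintype.card_coe, hcardQ]
    calc (c - 1) ^ n * c ^ ((n + s) * n - n)
        = ∑ _r ∈ (Finset.univ : Finset (Q → S)), (c - 1) ^ n := by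
          rw [Finset.sum_const, smul_eq_mul, hcardfun]; ring
      _ ≤ _ := Finset.sum_le_sum hstep
  -- complement counting
  have hcompl := Finset.card_filter_add_card_filter_not
    (s := (Finset.univ : Finset (Fin (n + s) × Fin n → S)))
    (p := fun f => Df f ≠ 0)
  have htotal : (Finset.univ : Finset (Fin (n + s) × Fin n → S)).card = c ^ ((n + s) * n) := by
    rw [Finset.card_univ, Fintype.card_fun, Fintype.card_coe]
    congr 1
    simp [Fintype.card_prod]
  have hNn : n ≤ (n + s) * n := Nat.le_mul_of_pos_left n (by omega)
  have hsplit : c ^ ((n + s) * n) = c ^ n * c ^ ((n + s) * n - n) := by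
    rw [← pow_add]; congr 1; omega
  have hsplit2 : c ^ ((n + s) * n - 1) = c ^ (n - 1) * c ^ ((n + s) * n - n) := by
    rw [← pow_add]; congr 1; omega
  have hpow := pow_le_sub c n
  -- identify the bad set with the ¬(≠ 0) filter
  have hbadeq : (Finset.univ.filter (fun f : Fin (n + s) × Fin n → S => Df f = 0))
      = Finset.univ.filter (fun f : Fin (n + s) × Fin n → S => ¬ Df f ≠ 0) := by
    apply Finset.filter_congr
    intro f _
    simp
  rw [show (Finset.univ.filter (fun f : Fin (n + s) × Fin n → S =>
      ((Matrix.of fun (i : Fin (n + s)) (j : Fin n) =>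
          if j.val ≤ i.val ∧ i.val ≤ j.val + s then (f (i, j) : ℝ) else 0).submatrix
        ι id).det = 0)) = Finset.univ.filter (fun f : Fin (n + s) × Fin n → S => Df f = 0)
    from rfl, hbadeq]
  have hmul1 : c ^ n * c ^ ((n + s) * n - n)
      ≤ ((c - 1) ^ n + n * c ^ (n - 1)) * c ^ ((n + s) * n - n) :=
    Nat.mul_le_mul_right _ hpow
  have hexpand : ((c - 1) ^ n + n * c ^ (n - 1)) * c ^ ((n + s) * n - n)
      = (c - 1) ^ n * c ^ ((n + s) * n - n) + n * (c ^ (n - 1) * c ^ ((n + s) * n - n)) := by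
    ring
  rw [hsplit2]
  omega

/-- Draw the band entries of the s-diagonal coding matrix (m = n + s workers)
independently and uniformly from a finite set S ⊆ ℝ with |S| ≥ 2n²·C(m,n).  With probability
at least 1/2 (i.e. at least half of all draws), every n×n row-submatrix of the resulting
matrix is invertible (nonzero determinant); hence the s-diagonal code achieves the recovery
threshold n.  Indices are 0-based: the band max(1, i−s) ≤ j ≤ min(i, n) (1-based) becomes
j ≤ i ∧ i ≤ j + s. -/
theorem stmt_2 (n s : ℕ) (hn : 1 ≤ n) (S : Finset ℝ)
    (hS : 2 * n ^ 2 * Nat.choose (n + s) n ≤ S.card) :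
    Fintype.card (Fin (n + s) × Fin n → S) ≤
      2 * (Finset.univ.filter (fun f : Fin (n + s) × Fin n → S =>
        ∀ (U : Finset (Fin (n + s))) (hU : U.card = n),
          ((Matrix.of fun (i : Fin (n + s)) (j : Fin n) =>
              if j.val ≤ i.val ∧ i.val ≤ j.val + s then (f (i, j) : ℝ) else 0).submatrix
            (fun a => U.orderEmbOfFin hU a) id).det ≠ 0)).card := by
  classical
  set c := S.card with hc
  set P : (Fin (n + s) × Fin n → S) → Prop := fun f =>
    ∀ (U : Finset (Fin (n + s))) (hU : U.card = n),
      ((Matrix.of fun (i : Fin (n + s)) (j : Fin n) =>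
          if j.val ≤ i.val ∧ i.val ≤ j.val + s then (f (i, j) : ℝ) else 0).submatrix
        (fun a => U.orderEmbOfFin hU a) id).det ≠ 0 with hP
  have htotal : Fintype.card (Fin (n + s) × Fin n → S) = c ^ ((n + s) * n) := by
    rw [Fintype.card_fun, Fintype.card_coe]
    congr 1
    simp [Fintype.card_prod]
  have hcompl := Finset.card_filter_add_card_filter_not
    (s := (Finset.univ : Finset (Fin (n + s) × Fin n → S))) (p := P)
  rw [Finset.card_univ, htotal] at hcompl
  -- union bound on the bad set
  set B : Finset (Fin (n + s)) → Finset (Fin (n + s) × Fin n → S) := fun U =>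
    Finset.univ.filter (fun f : Fin (n + s) × Fin n → S =>
      ∃ hU : U.card = n,
        ((Matrix.of fun (i : Fin (n + s)) (j : Fin n) =>
            if j.val ≤ i.val ∧ i.val ≤ j.val + s then (f (i, j) : ℝ) else 0).submatrix
          (fun a => U.orderEmbOfFin hU a) id).det = 0) with hB
  have hsub : Finset.univ.filter (fun f => ¬ P f) ⊆
      (Finset.powersetCard n (Finset.univ : Finset (Fin (n + s)))).biUnion B := by
    intro f hf
    simp only [Finset.mem_filter, hP, not_forall, ne_eq, not_not] at hf
    obtain ⟨U, hU, hdet⟩ := hf.2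
    refine Finset.mem_biUnion.2 ⟨U, ?_, ?_⟩
    · exact Finset.mem_powersetCard.2 ⟨Finset.subset_univ _, hU⟩
    · exact Finset.mem_filter.2 ⟨Finset.mem_univ _, hU, hdet⟩
  have hBcard : ∀ U ∈ Finset.powersetCard n (Finset.univ : Finset (Fin (n + s))),
      (B U).card ≤ n * c ^ ((n + s) * n - 1) := by
    intro U hUmem
    have hU : U.card = n := (Finset.mem_powersetCard.mp hUmem).2
    have heq : B U = Finset.univ.filter (fun f : Fin (n + s) × Fin n → S =>
        ((Matrix.of fun (i : Fin (n + s)) (j : Fin n) =>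
            if j.val ≤ i.val ∧ i.val ≤ j.val + s then (f (i, j) : ℝ) else 0).submatrix
          (fun a => U.orderEmbOfFin hU a) id).det = 0) := by
      rw [hB]
      apply Finset.filter_congr
      intro f _
      constructor
      · rintro ⟨h, hd⟩; exact hd
      · intro hd; exact ⟨hU, hd⟩
    rw [heq]
    exact badU_bound n s hn S (fun a => U.orderEmbOfFin hU a)
      (U.orderEmbOfFin hU).strictMono
  have hbad : (Finset.univ.filter (fun f => ¬ P f)).card
      ≤ Nat.choose (n + s) n * (n * c ^ ((n + s) * n - 1)) := by
    calc (Finset.univ.filter (fun f => ¬ P f)).card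
        ≤ ((Finset.powersetCard n (Finset.univ : Finset (Fin (n + s)))).biUnion B).card :=
          Finset.card_le_card hsub
      _ ≤ ∑ U ∈ Finset.powersetCard n (Finset.univ : Finset (Fin (n + s))), (B U).card :=
          Finset.card_biUnion_le
      _ ≤ (Finset.powersetCard n (Finset.univ : Finset (Fin (n + s)))).card *
            (n * c ^ ((n + s) * n - 1)) := Finset.sum_le_card_nsmul _ _ _ hBcard
      _ = Nat.choose (n + s) n * (n * c ^ ((n + s) * n - 1)) := by
          rw [Finset.card_powersetCard]
          simp
  -- final arithmetic
  have h2bad : 2 * (Finset.univ.filter (fun f => ¬ P f)).card ≤ c ^ ((n + s) * n) := by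
    have hle : 2 * (Nat.choose (n + s) n * (n * c ^ ((n + s) * n - 1)))
        ≤ c * c ^ ((n + s) * n - 1) := by
      have h1 : 2 * (Nat.choose (n + s) n * n) ≤ c := by
        have hnn : n ≤ n ^ 2 := by nlinarith
        have h2 : 2 * (Nat.choose (n + s) n * n) ≤ 2 * n ^ 2 * Nat.choose (n + s) n := by
          calc 2 * (Nat.choose (n + s) n * n) = 2 * n * Nat.choose (n + s) n := by ring
            _ ≤ 2 * n ^ 2 * Nat.choose (n + s) n :=
              Nat.mul_le_mul_right _ (Nat.mul_le_mul_left 2 hnn)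
        omega
      calc 2 * (Nat.choose (n + s) n * (n * c ^ ((n + s) * n - 1)))
          = (2 * (Nat.choose (n + s) n * n)) * c ^ ((n + s) * n - 1) := by ring
        _ ≤ c * c ^ ((n + s) * n - 1) := Nat.mul_le_mul_right _ h1
    have hpow : c * c ^ ((n + s) * n - 1) = c ^ ((n + s) * n) := by
      rw [← pow_succ']
      congr 1
      have : 1 ≤ (n + s) * n := Nat.mul_pos (by omega) hn
      omega
    omega
  rw [htotal]
  set x := (Finset.univ.filter P).card with hx
  set y := (Finset.univ.filter (fun f => ¬ P f)).card with hy
  clear_value x y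
  omega
end

section
/- For all integers n ≥ 1 and s ≥ 0, with m = n + s, there exists a matrix M ∈ ℝ^{m×n} with M_{ij} = 0 whenever j < max(1, i−s) or j > min(i, n), such that for every subset U ⊆ {1,…,m} with |U| = n the n×n submatrix of M with rows indexed by U is invertible. Such a matrix has at most n(s+1) nonzero entries; thus there is a coded computation strategy that simultaneously achieves the optimum recovery threshold n and the optimum computation load n(s+1). -/
open MvPolynomial

lemma finlow {n m : ℕ} (f : Fin n → Fin m) (hf : StrictMono f) :
    ∀ k (hk : k < n), k ≤ (f ⟨k, hk⟩ : ℕ) := by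
  intro k
  induction k with
  | zero => intro _; exact Nat.zero_le _
  | succ i ih =>
    intro hk
    have h1 : i < n := Nat.lt_of_succ_lt hk
    have h2 : (f ⟨i, h1⟩ : ℕ) < (f ⟨i + 1, hk⟩ : ℕ) :=
      hf (Fin.mk_lt_mk.mpr (Nat.lt_succ_self i))
    have h3 := ih h1
    omega

lemma finup {n m : ℕ} (f : Fin n → Fin m) (hf : StrictMono f) (j : Fin n) :
    (f j : ℕ) ≤ m - n + j := by
  have hmono : StrictMono (fun k : Fin n => (f k.rev).rev) := by
    intro a b hab
    exact Fin.rev_lt_rev.mpr (hf (Fin.rev_lt_rev.mpr hab))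
  have h := finlow _ hmono j.rev.val j.rev.isLt
  have h2 : (⟨j.rev.val, j.rev.isLt⟩ : Fin n) = j.rev := rfl
  rw [h2] at h
  simp only [Fin.rev_rev] at h
  rw [Fin.val_rev, Fin.val_rev] at h
  have hjm := (f j).isLt
  have hjn := j.isLt
  have hnm : n ≤ m := by simpa using Fintype.card_le_of_injective f hf.injective
  omega



/-- For all n ≥ 1, s ≥ 0, m = n + s, there exists an m×n real matrix M
supported on the diagonal band (0-based: j ≤ i ≤ j + s) such that every n×n row-submatrix
of M is invertible; such a matrix has at most n(s+1) nonzero entries.  Thus the s-diagonal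
code simultaneously achieves the optimum recovery threshold n and the optimum computation
load n(s+1). -/
theorem stmt_3 (n s : ℕ) (hn : 1 ≤ n) :
    ∃ M : Matrix (Fin (n + s)) (Fin n) ℝ,
      (∀ (i : Fin (n + s)) (j : Fin n),
        ¬(j.val ≤ i.val ∧ i.val ≤ j.val + s) → M i j = 0) ∧
      (∀ (U : Finset (Fin (n + s))) (hU : U.card = n),
        (M.submatrix (fun a => U.orderEmbOfFin hU a) id).det ≠ 0) ∧
      {p : Fin (n + s) × Fin n | M p.1 p.2 ≠ 0}.ncard ≤ n * (s + 1) := by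
  classical
  -- polynomial matrix
  set σ := (Fin (n + s) × Fin n)
  set P : Matrix (Fin (n + s)) (Fin n) (MvPolynomial σ ℝ) :=
    fun i j => if j.val ≤ i.val ∧ i.val ≤ j.val + s then X (i, j) else 0 with hP
  -- band facts for orderEmbOfFin
  have hband : ∀ (U : Finset (Fin (n + s))) (hU : U.card = n) (j : Fin n),
      j.val ≤ (U.orderEmbOfFin hU j).val ∧ (U.orderEmbOfFin hU j).val ≤ j.val + s := by
    intro U hU j
    have hsm : StrictMono (U.orderEmbOfFin hU) := (U.orderEmbOfFin hU).strictMono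
    constructor
    · have := finlow _ hsm j.val j.isLt
      simpa using this
    · have := finup _ hsm j
      omega
  -- each submatrix determinant of P is a nonzero polynomial
  have hdet : ∀ (U : Finset (Fin (n + s))) (hU : U.card = n),
      (P.submatrix (fun a => U.orderEmbOfFin hU a) id).det ≠ 0 := by
    intro U hU
    set u := fun a => U.orderEmbOfFin hU a
    set f : σ → ℝ := fun p => if p.1 = u p.2 then 1 else 0 with hf
    intro hc
    have h0 : (eval f) (P.submatrix u id).det = 1 := by
      rw [RingHom.map_det, RingHom.mapMatrix_apply]
      have : ((P.submatrix u id).map (eval f)) = 1 := by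
        ext a b
        simp only [Matrix.map_apply, Matrix.submatrix_apply, id_eq, Matrix.one_apply]
        simp only [hP]
        by_cases hab : a = b
        · subst hab
          rw [if_pos (hband U hU a), if_pos rfl]
          simp [hf]
        · rw [if_neg hab]
          by_cases hb : (b : ℕ) ≤ (u a : ℕ) ∧ (u a : ℕ) ≤ (b : ℕ) + s
          · rw [if_pos hb]
            simp only [eval_X, hf]
            rw [if_neg (fun he => hab ((U.orderEmbOfFin hU).injective he))]
          · rw [if_neg hb]; simp
      rw [this, Matrix.det_one]
    rw [hc] at h0
    simp at h0
  -- product of all the determinants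
  set D : Finset (Fin (n + s)) → MvPolynomial σ ℝ :=
    fun U => if h : U.card = n then (P.submatrix (fun a => U.orderEmbOfFin h a) id).det else 1
    with hD
  set Q : MvPolynomial σ ℝ := ∏ U : Finset (Fin (n + s)), D U with hQ
  have hQne : Q ≠ 0 := by
    rw [hQ]
    rw [Finset.prod_ne_zero_iff]
    intro U _
    by_cases h : U.card = n
    · simp only [hD, dif_pos h]; exact hdet U h
    · simp only [hD, dif_neg h]; exact one_ne_zero
  -- find a real point where Q doesn't vanish
  have hex : ∃ f : σ → ℝ, eval f Q ≠ 0 := by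
    by_contra hc
    push_neg at hc
    exact hQne (MvPolynomial.funext (fun x => by rw [hc x, map_zero]))
  obtain ⟨f, hfQ⟩ := hex
  -- the real matrix
  refine ⟨fun i j => if j.val ≤ i.val ∧ i.val ≤ j.val + s then f (i, j) else 0, ?_, ?_, ?_⟩
  · intro i j h
    simp [if_neg h]
  · intro U hU
    have hfac : eval f (D U) ≠ 0 := by
      have : eval f Q = ∏ V : Finset (Fin (n + s)), eval f (D V) := by
        rw [hQ, map_prod]
      rw [this] at hfQ
      exact Finset.prod_ne_zero_iff.mp hfQ U (Finset.mem_univ U)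
    simp only [hD, dif_pos hU] at hfac
    rw [RingHom.map_det, RingHom.mapMatrix_apply] at hfac
    convert hfac using 2
    ext a b
    simp only [Matrix.map_apply, Matrix.submatrix_apply, id_eq]
    simp only [hP]
    show (if (b : ℕ) ≤ ((U.orderEmbOfFin hU a) : ℕ) ∧ ((U.orderEmbOfFin hU a) : ℕ) ≤ (b : ℕ) + s then f ((U.orderEmbOfFin hU a), b) else 0) = _
    by_cases hb : (b : ℕ) ≤ ((U.orderEmbOfFin hU a) : ℕ) ∧ ((U.orderEmbOfFin hU a) : ℕ) ≤ (b : ℕ) + s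
    · rw [if_pos hb, if_pos hb, eval_X]
    · rw [if_neg hb, if_neg hb, map_zero]
  · -- cardinality bound
    have hsub : {p : Fin (n + s) × Fin n |
        (if p.2.val ≤ p.1.val ∧ p.1.val ≤ p.2.val + s then f (p.1, p.2) else 0) ≠ 0} ⊆
        {p : Fin (n + s) × Fin n | p.2.val ≤ p.1.val ∧ p.1.val ≤ p.2.val + s} := by
      intro p hp
      by_contra hc
      exact hp (if_neg hc)
    refine le_trans (Set.ncard_le_ncard hsub (Set.toFinite _)) ?_
    have hinj : Set.InjOn (fun p : Fin (n + s) × Fin n =>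
        ((p.2, ⟨min (p.1.val - p.2.val) s, by omega⟩) :
          Fin n × Fin (s + 1)))
        {p : Fin (n + s) × Fin n | p.2.val ≤ p.1.val ∧ p.1.val ≤ p.2.val + s} := by
      intro p hp q hq he
      simp only [Prod.mk.injEq, Fin.mk.injEq] at he
      have h1 : p.2 = q.2 := he.1
      have h1' : p.2.val = q.2.val := congrArg Fin.val h1
      have h2 := he.2
      simp only [Set.mem_setOf_eq] at hp hq
      have : p.1 = q.1 := by
        apply Fin.ext
        omega
      exact Prod.ext this h1
    calc {p : Fin (n + s) × Fin n | p.2.val ≤ p.1.val ∧ p.1.val ≤ p.2.val + s}.ncard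
        ≤ (Set.univ : Set (Fin n × Fin (s + 1))).ncard := by
          apply Set.ncard_le_ncard_of_injOn _ (fun p _ => Set.mem_univ _) hinj (Set.toFinite _)
      _ = n * (s + 1) := by
          rw [Set.ncard_univ]
          simp [Nat.card_eq_fintype_card]
end

section
/- Let n ≥ 1 and s ≥ 0 be integers and m = n + s. Consider the bipartite graph G^D with left vertex set V₁ = {1,…,m} and right vertex set V₂ = {1,…,n}, in which right vertex j is adjacent exactly to the left vertices {j, j+1, …, j+s}. Then for every subset U ⊆ V₁ with |U| = n, the induced bipartite subgraph on U and V₂ contains a perfect matching; equivalently, there exists an injective map f : {1,…,n} → U with j ≤ f(j) ≤ j + s for every j ∈ {1,…,n}. -/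
lemma aux_le {n : ℕ} {h : Fin n → ℕ} (hm : StrictMono h) : ∀ i : Fin n, i.val ≤ h i := by
  rintro ⟨v, hv⟩
  induction v with
  | zero => exact Nat.zero_le _
  | succ k ih =>
    have hk : k < n := Nat.lt_of_succ_lt hv
    have h1 : h ⟨k, hk⟩ < h ⟨k + 1, hv⟩ := hm (by simp [Fin.lt_def])
    have h2 := ih hk
    simp only at h2 ⊢
    omega

/-- In the bipartite graph G^D of the s-diagonal code (right vertex j adjacent
to left vertices j, j+1, …, j+s; 0-based indexing), every subset U of the m = n + s left
vertices with |U| = n admits a perfect matching with the n right vertices: there is an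
injective f : Fin n → Fin (n+s) with f j ∈ U and j ≤ f j ≤ j + s for all j. -/
theorem stmt_4 (n s : ℕ) (hn : 1 ≤ n) (U : Finset (Fin (n + s))) (hU : U.card = n) :
    ∃ f : Fin n → Fin (n + s), Function.Injective f ∧
      ∀ j : Fin n, f j ∈ U ∧ j.val ≤ (f j).val ∧ (f j).val ≤ j.val + s := by
  set e := U.orderEmbOfFin hU with he
  refine ⟨e, e.injective, fun j => ?_⟩
  refine ⟨U.orderEmbOfFin_mem hU j, ?_, ?_⟩
  · exact aux_le (fun a b hab => by exact_mod_cast e.strictMono hab) j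
  · -- upper bound via reversed map
    have hmono : StrictMono (fun i : Fin n => n + s - 1 - (e i.rev).val) := by
      intro a b hab
      have h1 : e b.rev < e a.rev := e.strictMono (Fin.rev_lt_rev.mpr hab)
      have h2 : (e a.rev).val < n + s := (e a.rev).isLt
      have h3 : (e b.rev).val < (e a.rev).val := h1
      simp only
      omega
    have := aux_le hmono j.rev
    have hrev : j.rev.rev = j := Fin.rev_rev j
    rw [hrev] at this
    have hjv : (j.rev : ℕ) = n - 1 - j.val := by
      simp [Fin.rev, Nat.sub_sub]
      omega
    have hlt : (e j).val < n + s := (e j).isLt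
    have hj : j.val < n := j.isLt
    omega
end

section
/- Let n ≥ 1 and s ≥ 0 be integers and m = n + s. For each i ∈ {1,…,m} let supp(i) = {j ∈ {1,…,n} : max(1, i−s) ≤ j ≤ min(i, n)}. Then for every subset I ⊆ {1,…,m} with |I| ≤ n, the union ∪_{i∈I} supp(i) has cardinality at least |I|. -/
lemma aux_le_s5 {k : ℕ} (f : Fin k → ℕ) (hf : StrictMono f) : ∀ t : Fin k, t.val ≤ f t := by
  rintro ⟨v, hv⟩
  induction v with
  | zero => exact Nat.zero_le _
  | succ v ih =>
    have hv' : v < k := Nat.lt_of_succ_lt hv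
    have h1 : v ≤ f ⟨v, hv'⟩ := ih hv'
    have h2 : f ⟨v, hv'⟩ < f ⟨v + 1, hv⟩ := hf (by simp [Fin.lt_def])
    show v + 1 ≤ f ⟨v + 1, hv⟩
    omega

/-- Hall condition for the s-diagonal code.  With n data partitions and
m = n + s workers, worker i accesses partitions supp(i) = {j : j ≤ i ≤ j + s} (0-based
version of max(1, i−s) ≤ j ≤ min(i, n)).  For every set I of workers with |I| ≤ n, the
union of the supports has cardinality at least |I|. -/
theorem stmt_5 (n s : ℕ) (hn : 1 ≤ n) (I : Finset (Fin (n + s))) (hI : I.card ≤ n) :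
    I.card ≤ (I.biUnion fun i : Fin (n + s) =>
      Finset.univ.filter fun j : Fin n => j.val ≤ i.val ∧ i.val ≤ j.val + s).card := by
  set k := I.card with hk
  let e := I.orderEmbOfFin hk.symm
  have he : StrictMono fun t : Fin k => (e t).val := fun a b hab => by
    exact_mod_cast e.strictMono hab
  have hle : ∀ t : Fin k, t.val ≤ (e t).val := aux_le_s5 _ he
  have hmem : ∀ t : Fin k, e t ∈ I := fun t => I.orderEmbOfFin_mem hk.symm t
  let g : Fin k → Fin n := fun t =>
    ⟨max ((e t).val - s) t.val, by
      have h1 := (e t).isLt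
      have h2 := t.isLt
      omega⟩
  have key : ∀ a b : Fin k, a < b → (g a).val < (g b).val := by
    intro a b hab
    have h2 : (e a).val < (e b).val := he hab
    have h3 : a.val < b.val := hab
    show max ((e a).val - s) a.val < max ((e b).val - s) b.val
    omega
  have main : (Finset.univ : Finset (Fin k)).card ≤ (I.biUnion fun i : Fin (n + s) =>
      Finset.univ.filter fun j : Fin n => j.val ≤ i.val ∧ i.val ≤ j.val + s).card := by
    apply Finset.card_le_card_of_injOn g
    · intro t _
      refine Finset.mem_biUnion.2 ⟨e t, hmem t, Finset.mem_filter.2 ⟨Finset.mem_univ _, ?_, ?_⟩⟩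
      · have := hle t
        show max ((e t).val - s) t.val ≤ (e t).val
        omega
      · show (e t).val ≤ max ((e t).val - s) t.val + s
        omega
    · intro a _ b _ hab
      rcases lt_trichotomy a b with h | h | h
      · exact absurd (congrArg Fin.val hab) (Nat.ne_of_lt (key a b h))
      · exact h
      · exact absurd (congrArg Fin.val hab) (Nat.ne_of_gt (key b a h))
  simpa [Finset.card_univ] using main
end

section
/- Let n ≥ 1 and let M ∈ ℝ^{(n+1)×n} be the matrix whose first row is e₁ᵀ, whose last row is e_nᵀ, and whose i-th row for 2 ≤ i ≤ n is e_{i−1}ᵀ + e_iᵀ (all nonzero coefficients equal to 1). Then for every k ∈ {1,…,n+1}, the n×n matrix obtained from M by deleting row k has determinant 1; in particular every n×n row-submatrix of M is invertible, so this 1-diagonal code achieves the optimum recovery threshold n, and M has exactly 2n nonzero entries, the optimum computation load for s = 1. -/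
lemma succAbove_val' {n : ℕ} (k : Fin (n+1)) (i : Fin n) :
    (k.succAbove i).val = if i.val < k.val then i.val else i.val + 1 := by
  rcases lt_or_ge (i.castSucc) k with h | h
  · rw [Fin.succAbove_of_castSucc_lt _ _ h, if_pos (by simpa [Fin.lt_def] using h)]
    simp
  · rw [Fin.succAbove_of_le_castSucc _ _ h,
      if_neg (not_lt.mpr (by simpa [Fin.le_def] using h))]
    simp

/-- The 1-diagonal code.  M ∈ ℝ^{(n+1)×n} has rows e₁ᵀ, e₁ᵀ+e₂ᵀ, …,
e_{n−1}ᵀ+e_nᵀ, e_nᵀ (0-based: M i j = 1 iff i = j or i = j + 1, else 0).  For every k,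
deleting row k yields an n×n matrix of determinant 1 (so every n×n row-submatrix is
invertible and the recovery threshold n is achieved), and M has exactly 2n nonzero
entries, the optimum computation load for s = 1. -/
theorem stmt_6 (n : ℕ) (hn : 1 ≤ n)
    (M : Matrix (Fin (n + 1)) (Fin n) ℝ)
    (hM : ∀ (i : Fin (n + 1)) (j : Fin n),
      M i j = if i.val = j.val ∨ i.val = j.val + 1 then 1 else 0) :
    (∀ k : Fin (n + 1), (M.submatrix k.succAbove id).det = 1) ∧
      {p : Fin (n + 1) × Fin n | M p.1 p.2 ≠ 0}.ncard = 2 * n := by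
  constructor
  · intro k
    rw [Matrix.det_apply]
    rw [Finset.sum_eq_single (1 : Equiv.Perm (Fin n))]
    · simp only [Equiv.Perm.sign_one, one_smul, Equiv.Perm.one_apply,
        Matrix.submatrix_apply, id_eq]
      apply Finset.prod_eq_one
      intro j _
      rw [hM, if_pos]
      rw [succAbove_val']
      split <;> omega
    · intro σ _ hσ
      have hex : ∃ i, M (k.succAbove (σ i)) i = 0 := by
        by_contra hall
        push_neg at hall
        apply hσ
        -- derive the structural condition from nonvanishing of entries
        have cond : ∀ i : Fin n,
            ((σ i).val < k.val ∧ ((σ i).val = i.val ∨ (σ i).val = i.val + 1))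
            ∨ (¬ (σ i).val < k.val ∧ ((σ i).val + 1 = i.val ∨ (σ i).val = i.val)) := by
          intro i
          have h := hall i
          rw [hM] at h
          have h1 : (k.succAbove (σ i)).val = i.val ∨
              (k.succAbove (σ i)).val = i.val + 1 := by
            by_contra hcon
            rw [if_neg hcon] at h
            exact h rfl
          rw [succAbove_val'] at h1
          by_cases hc : (σ i).val < k.val
          · rw [if_pos hc] at h1; exact Or.inl ⟨hc, h1⟩
          · rw [if_neg hc] at h1
            refine Or.inr ⟨hc, ?_⟩
            omega
        -- Lemma A: σ never maps i to i+1
        have A : ∀ d : ℕ, ∀ i : Fin n, i.val + d = n - 1 → (σ i).val ≠ i.val + 1 := by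
          intro d
          induction d using Nat.strong_induction_on with
          | _ d ih =>
            intro i hi hcontra
            have hlt : i.val + 1 < n := by have := (σ i).isLt; omega
            set i' : Fin n := ⟨i.val + 1, hlt⟩ with hi'
            have hk : (σ i).val < k.val := by
              rcases cond i with ⟨h1, _⟩ | ⟨_, h2⟩
              · exact h1
              · omega
            have hne : (σ i').val ≠ (σ i).val := by
              intro h
              have : i' = i := σ.injective (Fin.val_injective h)
              have := congrArg Fin.val this
              simp [hi'] at this
            have hival : i'.val = i.val + 1 := rfl
            rcases cond i' with ⟨h1, h2⟩ | ⟨h1, h2⟩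
            · rcases h2 with h2 | h2
              · omega
              · have hd : d ≠ 0 := by omega
                exact ih (d - 1) (by omega) i' (by omega) (by omega)
            · omega
        have A' : ∀ i : Fin n, (σ i).val ≠ i.val + 1 := fun i =>
          A (n - 1 - i.val) i (by have := i.isLt; omega)
        -- Lemma B: σ = id, by ascending strong induction
        have B : ∀ m : ℕ, ∀ i : Fin n, i.val = m → σ i = i := by
          intro m
          induction m using Nat.strong_induction_on with
          | _ m ih =>
            intro i hi
            have hA := A' i
            rcases cond i with ⟨h1, h2⟩ | ⟨h1, h2⟩
            · rcases h2 with h2 | h2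
              · exact Fin.val_injective h2
              · omega
            · rcases h2 with h2 | h2
              · -- σ i = i - 1 : contradicts injectivity with σ (i-1) = i-1
                have hm : 1 ≤ i.val := by omega
                have hjlt : i.val - 1 < n := by omega
                set j : Fin n := ⟨i.val - 1, hjlt⟩ with hj
                have hsj : σ j = j := ih (i.val - 1) (by omega) j rfl
                have : (σ i).val = (σ j).val := by
                  rw [hsj]; simp [hj]; omega
                have := σ.injective (Fin.val_injective this)
                have := congrArg Fin.val this
                simp [hj] at this
                omega
              · exact Fin.val_injective h2
        exact Equiv.ext fun i => B i.val i rfl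
      obtain ⟨i, hi⟩ := hex
      rw [Finset.prod_eq_zero (Finset.mem_univ i) (by simpa using hi), smul_zero]
    · intro h
      exact absurd (Finset.mem_univ 1) h
  · have hS : {p : Fin (n + 1) × Fin n | M p.1 p.2 ≠ 0}
        = (fun j : Fin n => ((j.castSucc : Fin (n+1)), j)) '' Set.univ
          ∪ (fun j : Fin n => ((j.succ : Fin (n+1)), j)) '' Set.univ := by
      ext ⟨a, j⟩
      simp only [Set.mem_setOf_eq, hM, Set.mem_union, Set.mem_image, Set.mem_univ,
        true_and, Prod.mk.injEq]
      constructor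
      · intro h
        have h' : a.val = j.val ∨ a.val = j.val + 1 := by
          by_contra hc
          rw [if_neg hc] at h
          exact h rfl
        rcases h' with h' | h'
        · exact Or.inl ⟨j, Fin.val_injective (by simpa using h'.symm), rfl⟩
        · exact Or.inr ⟨j, Fin.val_injective (by simpa using h'.symm), rfl⟩
      · rintro (⟨j', hj1, hj2⟩ | ⟨j', hj1, hj2⟩) <;> subst hj2 <;> subst hj1
        · simp
        · simp
    rw [hS]
    rw [Set.ncard_union_eq]
    · rw [Set.ncard_image_of_injective _ (fun a b h => by
          simpa using congrArg Prod.snd h),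
        Set.ncard_image_of_injective _ (fun a b h => by
          simpa using congrArg Prod.snd h)]
      simp [Set.ncard_univ]
      ring
    · rw [Set.disjoint_left]
      rintro p ⟨j, -, hj⟩ ⟨j', -, hj'⟩
      rw [← hj'] at hj
      have h2 := congrArg Prod.snd hj
      simp at h2
      subst h2
      have h1 := congrArg (fun q => (Prod.fst q).val) hj
      simp at h1
end

section
/- Let G be a bipartite graph with parts X and Y, |X| = |Y| = n, that contains no perfect matching. Then there exists a nonempty set S, contained entirely in X or entirely in Y, with the following properties: (1) |S| = |N(S)| + 1, where N(S) denotes the set of vertices adjacent to at least one vertex of S; (2) every vertex of N(S) has at least two neighbors in S; (3) 2|S| ≤ n + 1. -/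
open scoped Classical
open Finset

lemma hall_min_aux {X Y : Type*} [Fintype X] [Fintype Y] (n : ℕ)
    (hX : Fintype.card X = n) (hY : Fintype.card Y = n)
    (E : X → Y → Prop) (S : Finset X)
    (hbad : (Finset.univ.filter fun y : Y => ∃ x ∈ S, E x y).card < S.card)
    (hminX : ∀ A : Finset X,
      (Finset.univ.filter fun y : Y => ∃ x ∈ A, E x y).card < A.card → S.card ≤ A.card)
    (hminY : ∀ B : Finset Y,
      (Finset.univ.filter fun x : X => ∃ y ∈ B, E x y).card < B.card → S.card ≤ B.card) :
    S.Nonempty ∧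
      S.card = (Finset.univ.filter fun y : Y => ∃ x ∈ S, E x y).card + 1 ∧
      (∀ y ∈ Finset.univ.filter fun y : Y => ∃ x ∈ S, E x y,
        2 ≤ (S.filter fun x => E x y).card) ∧
      2 * S.card ≤ n + 1 := by
  set NS := Finset.univ.filter fun y : Y => ∃ x ∈ S, E x y with hNS
  have hSne : S.Nonempty := card_pos.mp (lt_of_le_of_lt (Nat.zero_le _) hbad)
  have hcard : S.card = NS.card + 1 := by
    rcases hSne with ⟨x0, hx0⟩
    by_contra h
    have hsub : (Finset.univ.filter fun y : Y => ∃ x ∈ S.erase x0, E x y) ⊆ NS := by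
      intro y hy
      simp only [hNS, mem_filter, mem_univ, true_and] at hy ⊢
      obtain ⟨x, hx, hxy⟩ := hy
      exact ⟨x, mem_of_mem_erase hx, hxy⟩
    have hle := card_le_card hsub
    have hbad' : (Finset.univ.filter fun y : Y => ∃ x ∈ S.erase x0, E x y).card
        < (S.erase x0).card := by
      rw [card_erase_of_mem hx0]; omega
    have hm := hminX _ hbad'
    rw [card_erase_of_mem hx0] at hm
    omega
  refine ⟨hSne, hcard, ?_, ?_⟩
  · intro y hy
    simp only [hNS, mem_filter, mem_univ, true_and] at hy
    obtain ⟨x, hxS, hxy⟩ := hy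
    by_contra h
    push_neg at h
    have hx_mem : x ∈ S.filter fun x => E x y := mem_filter.mpr ⟨hxS, hxy⟩
    have huniq : ∀ x' ∈ S, E x' y → x' = x := by
      intro x' hx' hxy'
      by_contra hne
      have hss : ({x', x} : Finset X) ⊆ S.filter fun x => E x y := by
        intro z hz
        simp only [mem_insert, mem_singleton] at hz
        rcases hz with rfl | rfl
        · exact mem_filter.mpr ⟨hx', hxy'⟩
        · exact hx_mem
      have hc2 := card_le_card hss
      rw [card_insert_of_notMem (by simpa using hne), card_singleton] at hc2
      omega
    have hyNS : y ∈ NS := by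
      simp only [hNS, mem_filter, mem_univ, true_and]; exact ⟨x, hxS, hxy⟩
    have hsub : (Finset.univ.filter fun y' : Y => ∃ x' ∈ S.erase x, E x' y') ⊆ NS.erase y := by
      intro y' hy'
      simp only [mem_filter, mem_univ, true_and] at hy'
      obtain ⟨x', hx', hxy'⟩ := hy'
      refine mem_erase.mpr ⟨?_, ?_⟩
      · rintro rfl
        exact (mem_erase.mp hx').1 (huniq x' (mem_of_mem_erase hx') hxy')
      · simp only [hNS, mem_filter, mem_univ, true_and]
        exact ⟨x', mem_of_mem_erase hx', hxy'⟩
    have h1 := card_le_card hsub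
    rw [card_erase_of_mem hyNS] at h1
    have hNSpos : 1 ≤ NS.card := card_pos.mpr ⟨y, hyNS⟩
    have hbad' : (Finset.univ.filter fun y' : Y => ∃ x' ∈ S.erase x, E x' y').card
        < (S.erase x).card := by
      rw [card_erase_of_mem hxS]; omega
    have hm := hminX _ hbad'
    rw [card_erase_of_mem hxS] at hm
    omega
  · set T := Finset.univ.filter fun y : Y => y ∉ NS with hT
    have hTeq : T = NSᶜ := by
      ext y; simp [hT, mem_compl]
    have hTcard : T.card = n - NS.card := by
      rw [hTeq, card_compl, hY]
    have hsub : (Finset.univ.filter fun x : X => ∃ y ∈ T, E x y) ⊆ Sᶜ := by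
      intro x hx
      simp only [mem_filter, mem_univ, true_and] at hx
      obtain ⟨y, hyT, hxy⟩ := hx
      rw [mem_compl]
      intro hxS
      have hyNS : y ∈ NS := by
        simp only [hNS, mem_filter, mem_univ, true_and]; exact ⟨x, hxS, hxy⟩
      rw [hTeq, mem_compl] at hyT
      exact hyT hyNS
    have hScard_le : S.card ≤ n := hX ▸ card_le_univ S
    have hNX := card_le_card hsub
    rw [card_compl, hX] at hNX
    have hbadT : (Finset.univ.filter fun x : X => ∃ y ∈ T, E x y).card < T.card := by omega
    have hm := hminY _ hbadT
    omega

/-- if a bipartite graph with parts X, Y of equal size n has no perfect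
matching, then there is a nonempty set S contained in one part with |S| = |N(S)| + 1,
every vertex of N(S) having at least two neighbors in S, and 2|S| ≤ n + 1. -/
theorem stmt_9 {X Y : Type*} [Fintype X] [Fintype Y] (n : ℕ)
    (hX : Fintype.card X = n) (hY : Fintype.card Y = n)
    (E : X → Y → Prop)
    (hpm : ¬∃ f : X ≃ Y, ∀ x, E x (f x)) :
    (∃ S : Finset X, S.Nonempty ∧
      S.card = (Finset.univ.filter fun y : Y => ∃ x ∈ S, E x y).card + 1 ∧
      (∀ y ∈ Finset.univ.filter fun y : Y => ∃ x ∈ S, E x y,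
        2 ≤ (S.filter fun x => E x y).card) ∧
      2 * S.card ≤ n + 1) ∨
    (∃ S : Finset Y, S.Nonempty ∧
      S.card = (Finset.univ.filter fun x : X => ∃ y ∈ S, E x y).card + 1 ∧
      (∀ x ∈ Finset.univ.filter fun x : X => ∃ y ∈ S, E x y,
        2 ≤ (S.filter fun y => E x y).card) ∧
      2 * S.card ≤ n + 1) := by
  have hex : ∃ A : Finset X, (Finset.univ.filter fun y : Y => ∃ x ∈ A, E x y).card < A.card := by
    by_contra h
    push_neg at h
    have hall : ∀ (A : Finset X),
        A.card ≤ (A.biUnion fun x => Finset.univ.filter fun y => E x y).card := by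
      intro A
      have heq : (A.biUnion fun x => Finset.univ.filter fun y => E x y)
          = Finset.univ.filter fun y : Y => ∃ x ∈ A, E x y := by
        ext y; simp
      rw [heq]; exact h A
    obtain ⟨f, hfinj, hf⟩ := (Finset.all_card_le_biUnion_card_iff_existsInjective' _).mp hall
    have hbij : Function.Bijective f :=
      (Fintype.bijective_iff_injective_and_card f).mpr ⟨hfinj, by rw [hX, hY]⟩
    exact hpm ⟨Equiv.ofBijective f hbij, fun x => by simpa using hf x⟩
  have hP : ∃ m : ℕ,
      (∃ A : Finset X, (Finset.univ.filter fun y : Y => ∃ x ∈ A, E x y).card < A.card ∧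
        A.card = m) ∨
      (∃ B : Finset Y, (Finset.univ.filter fun x : X => ∃ y ∈ B, E x y).card < B.card ∧
        B.card = m) := by
    obtain ⟨A, hA⟩ := hex; exact ⟨A.card, Or.inl ⟨A, hA, rfl⟩⟩
  rcases Nat.find_spec hP with ⟨A, hA, hAk⟩ | ⟨B, hB, hBk⟩
  · left
    refine ⟨A, hall_min_aux n hX hY E A hA ?_ ?_⟩
    · intro A' h'
      exact hAk ▸ Nat.find_min' hP (Or.inl ⟨A', h', rfl⟩)
    · intro B' h'
      exact hAk ▸ Nat.find_min' hP (Or.inr ⟨B', h', rfl⟩)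
  · right
    refine ⟨B, hall_min_aux n hY hX (fun y x => E x y) B hB ?_ ?_⟩
    · intro B' h'
      exact hBk ▸ Nat.find_min' hP (Or.inr ⟨B', h', rfl⟩)
    · intro A' h'
      exact hBk ▸ Nat.find_min' hP (Or.inl ⟨A', h', rfl⟩)
end

section
/- Let n ≥ 1 and s ≥ 0 be integers and let M ∈ ℝ^{(n+s)×n} be an s-diagonal coding matrix, i.e., M_{ij} ≠ 0 if and only if max(1, i−s) ≤ j ≤ min(i, n). Let U = {i₁ < i₂ < … < i_n} ⊆ {1,…,n+s} be any set of n received workers, and let k = |{a : i_a ≤ n}|. Then n − k ≤ s (so at most s blocks must be recovered by rooting steps), and the k×k matrix with entries M_{i_a, i_b} for 1 ≤ a, b ≤ k is lower triangular (its (a,b) entry is 0 whenever b > a) with all diagonal entries M_{i_a, i_a} nonzero; in particular it is invertible, so the remaining k blocks indexed by {i₁,…,i_k} can be recovered by peeling. -/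
open scoped Classical

/-- decoding structure of the s-diagonal code.  M ∈ ℝ^{(n+s)×n} has
M_{ij} ≠ 0 iff j ≤ i ≤ j + s (0-based band, i.e. max(1, i−s) ≤ j ≤ min(i, n) in 1-based
indexing).  For any set U of n received workers, enumerated increasingly by
e = U.orderEmbOfFin, let k be the number of received workers with index < n.  Then
n − k ≤ s (at most s rooting steps), and the k×k matrix (M_{e a, e b}) over the received
workers with index < n is lower triangular (entry (a,b) is 0 when a < b) with nonzero
diagonal, hence the remaining k blocks are recoverable by peeling. -/
theorem stmt_13 (n s : ℕ) (hn : 1 ≤ n) (M : Matrix (Fin (n + s)) (Fin n) ℝ)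
    (hM : ∀ (i : Fin (n + s)) (j : Fin n),
      M i j ≠ 0 ↔ (j.val ≤ i.val ∧ i.val ≤ j.val + s))
    (U : Finset (Fin (n + s))) (hU : U.card = n) :
    (let e : Fin n → Fin (n + s) := fun a => U.orderEmbOfFin hU a
    let k : ℕ := (Finset.univ.filter fun a : Fin n => (e a).val < n).card
    n - k ≤ s ∧
      ∀ a b : Fin n, ∀ (ha : (e a).val < n) (hb : (e b).val < n),
        (a < b → M (e a) ⟨(e b).val, hb⟩ = 0) ∧ M (e a) ⟨(e a).val, ha⟩ ≠ 0) := by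
  intro e k
  have hemono : StrictMono e := (U.orderEmbOfFin hU).strictMono
  constructor
  · -- n - k ≤ s
    have hsplit :
        (Finset.univ.filter fun a : Fin n => (e a).val < n).card +
          (Finset.univ.filter fun a : Fin n => ¬ (e a).val < n).card = n := by
      rw [Finset.card_filter_add_card_filter_not]
      simp
    have hbig :
        (Finset.univ.filter fun a : Fin n => ¬ (e a).val < n).card ≤ s := by
      have : (Finset.univ.filter fun a : Fin n => ¬ (e a).val < n).card ≤
          (Finset.range s).card := by
        apply Finset.card_le_card_of_injOn (fun a => (e a).val - n)
        · intro a ha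
          simp only [Finset.mem_coe, Finset.mem_filter, Finset.mem_univ, true_and, not_lt] at ha
          have h1 := (e a).isLt
          simp only [Finset.mem_coe, Finset.mem_range]
          omega
        · intro a ha b hb hab
          simp only [Finset.mem_coe, Finset.mem_filter, Finset.mem_univ, true_and,
            not_lt] at ha hb
          have hab' : (e a).val - n = (e b).val - n := hab
          have : (e a).val = (e b).val := by omega
          exact hemono.injective (Fin.val_injective this)
      simpa using this
    omega
  · intro a b ha hb
    constructor
    · intro hab
      by_contra h
      have h1 : (e b).val ≤ (e a).val := ((hM (e a) ⟨(e b).val, hb⟩).mp h).1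
      have h2 : (e a).val < (e b).val := hemono hab
      omega
    · exact (hM (e a) ⟨(e a).val, ha⟩).mpr ⟨le_refl _, Nat.le_add_right _ _⟩
end

section
/- Let X and Y be sets of size n, let L ⊆ X × Y and R ⊆ Y × X be two sets of arcs, and let G be the bipartite graph with an edge between x ∈ X and y ∈ Y if and only if (x, y) ∈ L or (y, x) ∈ R. Suppose (A, B) is a forbidden k-pair of G with 2 ≤ k < (n+1)/2. Then for every vertex v ∈ Y∖B, either there exists a ∈ A with (a, v) ∈ L, or there exist at least two distinct vertices a, a' ∈ A with (v, a) ∈ R and (v, a') ∈ R. -/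
open scoped Classical

/-- A k-blocking pair in the bipartite graph with parts X, Y (|Y| = n on the right):
A ⊆ X with |A| = k, B ⊆ Y with |B| = n − k + 1, and no edge joins A to B. -/
def IsBlockingPair {X Y : Type*} (E : X → Y → Prop) (n k : ℕ)
    (A : Finset X) (B : Finset Y) : Prop :=
  A.card = k ∧ B.card = n - k + 1 ∧ ∀ a ∈ A, ∀ b ∈ B, ¬E a b

/-- A forbidden k-pair: a k-blocking pair (A, B) such that either
(i) 2 ≤ k < (n+1)/2 and no (k−1)-blocking pair (A∖{v₁}, B∪{v₂}) exists with v₁ ∈ A,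
v₂ ∈ Y∖B, or (ii) (n+1)/2 ≤ k ≤ n−1 and no (k+1)-blocking pair (A∪{v₁}, B∖{v₂}) exists
with v₁ ∈ X∖A, v₂ ∈ B. -/
def IsForbiddenPair {X Y : Type*} [Fintype X] [Fintype Y] (E : X → Y → Prop) (n k : ℕ)
    (A : Finset X) (B : Finset Y) : Prop :=
  IsBlockingPair E n k A B ∧
    ((2 ≤ k ∧ 2 * k < n + 1 ∧
        ∀ v₁ ∈ A, ∀ v₂ ∈ Finset.univ \ B,
          ¬IsBlockingPair E n (k - 1) (A.erase v₁) (insert v₂ B)) ∨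
      (n + 1 ≤ 2 * k ∧ k ≤ n - 1 ∧
        ∀ v₁ ∈ Finset.univ \ A, ∀ v₂ ∈ B,
          ¬IsBlockingPair E n (k + 1) (insert v₁ A) (B.erase v₂)))

/-- in the two-sided arc model (edge between x and y iff (x,y) ∈ L or
(y,x) ∈ R), if (A, B) is a forbidden k-pair with 2 ≤ k < (n+1)/2, then every vertex
v ∈ Y∖B either receives an L-arc from some a ∈ A, or sends R-arcs to at least two
distinct vertices of A. -/
theorem stmt_15 {X Y : Type*} [Fintype X] [Fintype Y] (n : ℕ)
    (hX : Fintype.card X = n) (hY : Fintype.card Y = n)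
    (L : Set (X × Y)) (R : Set (Y × X)) (k : ℕ) (hk2 : 2 ≤ k) (hk : 2 * k < n + 1)
    (A : Finset X) (B : Finset Y)
    (hforb : IsForbiddenPair (fun x y => (x, y) ∈ L ∨ (y, x) ∈ R) n k A B) :
    ∀ v : Y, v ∉ B →
      (∃ a ∈ A, (a, v) ∈ L) ∨
        ∃ a ∈ A, ∃ a' ∈ A, a ≠ a' ∧ (v, a) ∈ R ∧ (v, a') ∈ R := by
  intro v hv
  by_contra hcon
  push_neg at hcon
  obtain ⟨hnoL, hR⟩ := hcon
  obtain ⟨⟨hAcard, hBcard, hblock⟩, hcase⟩ := hforb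
  rcases hcase with ⟨-, -, hI⟩ | ⟨hle, -, -⟩
  · -- pick v₁ ∈ A absorbing the unique possible R-arc
    have hAne : A.Nonempty := by
      rw [← Finset.card_pos, hAcard]; omega
    have hkn : k ≤ n := by omega
    obtain ⟨v₁, hv₁A, hv₁⟩ : ∃ v₁ ∈ A, ∀ a ∈ A, a ≠ v₁ → (v, a) ∉ R := by
      by_cases hex : ∃ a ∈ A, (v, a) ∈ R
      · obtain ⟨a, haA, haR⟩ := hex
        exact ⟨a, haA, fun a' ha' hne hR' => hR a haA a' ha' (Ne.symm hne) haR hR'⟩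
      · push_neg at hex
        exact ⟨hAne.choose, hAne.choose_spec, fun a ha _ => hex a ha⟩
    apply hI v₁ hv₁A v (by simp [hv])
    refine ⟨?_, ?_, ?_⟩
    · rw [Finset.card_erase_of_mem hv₁A, hAcard]
    · rw [Finset.card_insert_of_notMem hv, hBcard]; omega
    · intro a ha b hb hE
      rw [Finset.mem_insert] at hb
      have haA := Finset.mem_of_mem_erase ha
      rcases hb with rfl | hbB
      · rcases hE with hL | hRr
        · exact hnoL a haA hL
        · exact hv₁ a haA (Finset.ne_of_mem_erase ha) hRr
      · exact hblock a haA b hbB hE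
  · omega
end

section
/- For all natural numbers k, n, m, d with k ≤ n ≤ m (and binomial coefficients C(a,b) equal to 0 when b > a), the following identity holds: Σ_{l₁=2}^{d} Σ_{l₂=l₁}^{d} C(k, l₁) · C(n−k, l₂−l₁) · C(m−n, d−l₂) = C(m, d) − C(m−k, d) − k·C(m−k, d−1). -/
/-- Vandermonde in range form. -/
lemma vand_range (a b t : ℕ) :
    ∑ i ∈ Finset.range (t + 1), a.choose i * b.choose (t - i) = (a + b).choose t := by
  rw [Nat.add_choose_eq, Finset.Nat.sum_antidiagonal_eq_sum_range_succ_mk]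

/-- for all naturals k ≤ n ≤ m and d (with C(a,b) = 0 for b > a, and the
term k·C(m−k, d−1) read as 0 when d = 0, i.e. C(m−k, −1) = 0),
Σ_{l₁=2}^{d} Σ_{l₂=l₁}^{d} C(k,l₁)·C(n−k,l₂−l₁)·C(m−n,d−l₂)
  = C(m,d) − C(m−k,d) − k·C(m−k,d−1). -/
theorem stmt_16 (k n m d : ℕ) (hkn : k ≤ n) (hnm : n ≤ m) :
    (∑ l₁ ∈ Finset.Icc 2 d, ∑ l₂ ∈ Finset.Icc l₁ d,
        (k.choose l₁ * (n - k).choose (l₂ - l₁) * (m - n).choose (d - l₂) : ℤ)) =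
      (m.choose d : ℤ) - ((m - k).choose d : ℤ) -
        (k : ℤ) * (if d = 0 then 0 else ((m - k).choose (d - 1) : ℤ)) := by
  have hkm : k ≤ m := hkn.trans hnm
  -- inner sum
  have inner : ∀ l₁ ∈ Finset.Icc 2 d,
      (∑ l₂ ∈ Finset.Icc l₁ d,
        (k.choose l₁ * (n - k).choose (l₂ - l₁) * (m - n).choose (d - l₂) : ℤ))
      = (k.choose l₁ : ℤ) * ((m - k).choose (d - l₁) : ℤ) := by
    intro l₁ hl₁
    have hl₁d : l₁ ≤ d := (Finset.mem_Icc.mp hl₁).2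
    have h1 : ∀ l₂ ∈ Finset.Icc l₁ d,
        (k.choose l₁ * (n - k).choose (l₂ - l₁) * (m - n).choose (d - l₂) : ℤ)
        = (k.choose l₁ : ℤ) * ((n - k).choose (l₂ - l₁) * (m - n).choose (d - l₂) : ℕ) := by
      intro l₂ _
      push_cast
      ring
    rw [Finset.sum_congr rfl h1, ← Finset.mul_sum, ← Nat.cast_sum]
    congr 1
    rw [← Finset.Ico_add_one_right_eq_Icc, Finset.sum_Ico_eq_sum_range]
    have hrw : d + 1 - l₁ = (d - l₁) + 1 := by omega
    rw [hrw]
    have := vand_range (n - k) (m - n) (d - l₁)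
    have hmk : (n - k) + (m - n) = m - k := by omega
    rw [hmk] at this
    rw [← this]
    congr 1
    apply Finset.sum_congr rfl
    intro j hj
    congr 1
    · congr 1; omega
    · congr 1
      have := Finset.mem_range.mp hj
      omega
  rw [Finset.sum_congr rfl inner]
  -- outer sum
  rcases Nat.eq_zero_or_pos d with hd | hd
  · subst hd
    simp
  -- d ≥ 1
  have hvand := vand_range k (m - k) d
  rw [Nat.add_sub_cancel' hkm] at hvand
  have hsplit : Finset.range (d + 1) = insert 0 (insert 1 (Finset.Icc 2 d)) := by
    ext x
    simp [Finset.mem_range, Finset.mem_Icc]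
    omega
  rw [hsplit] at hvand
  rw [Finset.sum_insert (by simp), Finset.sum_insert (by simp [Finset.mem_Icc])] at hvand
  simp only [Nat.choose_zero_right, Nat.choose_one_right, one_mul, Nat.sub_zero] at hvand
  have hne : d ≠ 0 := by omega
  rw [if_neg hne]
  have hZ := congrArg (Nat.cast (R := ℤ)) hvand
  push_cast at hZ
  linarith
end
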